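/- Let n ≥ 1 and let M be an n×n complex matrix admitting a diagonalization M = U · diag(λ_1, …, λ_n) · U⁻¹ with U invertible, where the λ_i are pairwise distinct with |λ_i − λ_j| ≥ ε for all i ≠ j (ε > 0) and |λ_i| ≤ B for all i. Let E be a natural number, let δ > 0, and let p be a polynomial with complex coefficients such that |p(λ_i) − λ_i^E| ≤ δ for every i. Then every entry of the matrix p(M) − M^E has absolute value at most δ · n² · (1+B)^{n−1} · ε^{−(n−1)} · (n · max(1, ‖M‖))^{n−1}. -/

import Mathlib

/-!
With `q = p - X ^ E`, the matrix `q(M)` only depends on the values `q(λ_i)`, since `M` is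
diagonalizable with spectrum `λ`; hence `q(M) = ∑ᵢ q(λᵢ) ℓᵢ(M)` for the Lagrange basis `ℓᵢ` at the
nodes `λ`. Each `ℓᵢ(M) = ∏_{j ≠ i} (M - λⱼ) / (λᵢ - λⱼ)` is a product of `n - 1` factors of
`ℓ∞` operator norm at most `ε⁻¹ (‖M‖ + B)`, and that norm is comparable to the largest entry up
to a factor `n`.
-/

/-- The max-norm of a matrix: the supremum of the absolute values of its entries. -/
noncomputable def matMaxNorm {n : ℕ} (M : Matrix (Fin n) (Fin n) ℂ) : ℝ :=
  ⨆ i, ⨆ j, ‖M i j‖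

open Polynomial Finset

theorem Polynomial.aeval_units_conj {R A : Type*} [CommSemiring R] [Semiring A] [Algebra R A]
    (u : Aˣ) (a : A) (p : R[X]) : aeval (↑u * a * ↑u⁻¹ : A) p = ↑u * aeval a p * ↑u⁻¹ := by
  simpa [ConjAct.units_smul_def] using
    aeval_algHom_apply (MulSemiringAction.toAlgEquiv R A (ConjAct.toConjAct u)) a p

theorem Matrix.aeval_diagonal {ι R : Type*} [Fintype ι] [DecidableEq ι] [CommSemiring R]
    (d : ι → R) (p : R[X]) : aeval (diagonal d) p = diagonal fun k ↦ p.eval (d k) := by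
  rw [← diagonalAlgHom_apply R, aeval_algHom_apply, aeval_pi]
  rfl

theorem Matrix.aeval_conj_diagonal_eq_sum_basis {ι F : Type*} [Fintype ι] [DecidableEq ι]
    [Field F] {U : Matrix ι ι F} (hU : IsUnit U) {d : ι → F} (hd : Function.Injective d)
    (p : F[X]) :
    aeval (U * diagonal d * U⁻¹) p =
      ∑ k, p.eval (d k) • aeval (U * diagonal d * U⁻¹) (Lagrange.basis univ d k) := by
  have hinterp : aeval (U * diagonal d * U⁻¹) p =
      aeval (U * diagonal d * U⁻¹) (Lagrange.interpolate univ d fun k ↦ p.eval (d k)) := by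
    obtain ⟨u, rfl⟩ := hU
    simp only [← coe_units_inv, aeval_units_conj, aeval_diagonal]
    congr 3
    funext k
    rw [Lagrange.eval_interpolate_at_node _ hd.injOn (mem_univ k)]
  rw [hinterp, Lagrange.interpolate_apply, map_sum]
  simp only [map_mul, aeval_C, Algebra.smul_def]

section NormedAlgebra

variable {𝕜 A : Type*} [NormedField 𝕜] [SeminormedRing A] [NormOneClass A] [NormedAlgebra 𝕜 A]

theorem Polynomial.norm_aeval_prod_le {ι : Type*} (a : A) (f : ι → 𝕜[X]) (s : Finset ι) :
    ‖aeval a (∏ j ∈ s, f j)‖ ≤ ∏ j ∈ s, ‖aeval a (f j)‖ := by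
  classical
  induction s using Finset.induction_on with
  | empty => simp
  | insert j s hj ih =>
    rw [prod_insert hj, prod_insert hj, map_mul]
    exact (norm_mul_le _ _).trans (mul_le_mul_of_nonneg_left ih (norm_nonneg _))

theorem Lagrange.norm_aeval_basisDivisor_le (a : A) (x y : 𝕜) :
    ‖aeval a (Lagrange.basisDivisor x y)‖ ≤ ‖x - y‖⁻¹ * (‖a‖ + ‖y‖) := by
  rw [Lagrange.basisDivisor, map_mul, aeval_C, map_sub, aeval_X, aeval_C, ← Algebra.smul_def,
    norm_smul, norm_inv]
  gcongr
  exact (norm_sub_le _ _).trans_eq (by rw [norm_algebraMap'])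

theorem Lagrange.norm_aeval_basis_le {ι : Type*} [DecidableEq ι] (a : A) (s : Finset ι)
    (v : ι → 𝕜) (i : ι) {ε B : ℝ} (hε : 0 < ε) (hsep : ∀ j ∈ s, j ≠ i → ε ≤ ‖v i - v j‖)
    (hB : ∀ j ∈ s, ‖v j‖ ≤ B) :
    ‖aeval a (Lagrange.basis s v i)‖ ≤ (ε⁻¹ * (‖a‖ + B)) ^ #(s.erase i) := by
  refine (norm_aeval_prod_le a _ _).trans <|
    (prod_le_prod (fun _ _ ↦ norm_nonneg _) fun j hj ↦ ?_).trans_eq (prod_const _)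
  obtain ⟨hji, hjs⟩ := mem_erase.1 hj
  refine (norm_aeval_basisDivisor_le a _ _).trans ?_
  gcongr
  · exact hsep j hjs hji
  · exact hB j hjs

end NormedAlgebra

-- The `ℓ∞` operator norm (largest row sum) is submultiplicative with `‖1‖ = 1`, and lies between
-- the largest entry and `card ι` times it.
attribute [local instance] Matrix.linftyOpSeminormedAddCommGroup Matrix.linftyOpSemiNormedRing
  Matrix.linftyOpNormedAlgebra

theorem Matrix.norm_apply_le_linfty_opNorm {m n α : Type*} [Fintype m] [Fintype n]
    [SeminormedAddCommGroup α] (A : Matrix m n α) (i : m) (j : n) : ‖A i j‖ ≤ ‖A‖ := by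
  rw [linfty_opNorm_def]
  exact_mod_cast (single_le_sum (fun k _ ↦ zero_le) (mem_univ j)).trans
    (le_sup (f := fun i ↦ ∑ k, ‖A i k‖₊) (mem_univ i))

theorem Matrix.linfty_opNorm_le_card_mul {m n α : Type*} [Fintype m] [Fintype n]
    [SeminormedAddCommGroup α] (A : Matrix m n α) {c : ℝ} (hc : 0 ≤ c)
    (hA : ∀ i j, ‖A i j‖ ≤ c) : ‖A‖ ≤ Fintype.card n * c := by
  lift c to NNReal using hc
  rw [linfty_opNorm_def]
  norm_cast
  refine Finset.sup_le fun i _ ↦ ?_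
  simpa using sum_le_sum fun j (_ : j ∈ univ) ↦ (show ‖A i j‖₊ ≤ c from hA i j)

theorem Matrix.norm_aeval_conj_diagonal_le {ι 𝕜 : Type*} [Fintype ι] [DecidableEq ι] [Nonempty ι]
    [NormedField 𝕜] {U : Matrix ι ι 𝕜} (hU : IsUnit U) {d : ι → 𝕜} {ε B δ : ℝ} (hε : 0 < ε)
    (hsep : ∀ i j, i ≠ j → ε ≤ ‖d i - d j‖) (hB : ∀ i, ‖d i‖ ≤ B) (p : 𝕜[X])
    (hp : ∀ i, ‖p.eval (d i)‖ ≤ δ) :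
    ‖aeval (U * diagonal d * U⁻¹) p‖ ≤
      Fintype.card ι * (δ * (ε⁻¹ * (‖U * diagonal d * U⁻¹‖ + B)) ^ (Fintype.card ι - 1)) := by
  have hd : Function.Injective d := fun k l hkl ↦ by
    by_contra hne
    simpa [hkl] using (hε.trans_le (hsep k l hne))
  have hbasis (k : ι) : ‖aeval (U * diagonal d * U⁻¹) (Lagrange.basis univ d k)‖ ≤
      (ε⁻¹ * (‖U * diagonal d * U⁻¹‖ + B)) ^ (Fintype.card ι - 1) := by
    simpa [card_erase_of_mem] using Lagrange.norm_aeval_basis_le _ univ d k hε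
      (fun l _ hl ↦ hsep k l hl.symm) fun l _ ↦ hB l
  rw [aeval_conj_diagonal_eq_sum_basis hU hd, ← card_univ, ← nsmul_eq_mul, ← sum_const]
  refine (norm_sum_le _ _).trans (sum_le_sum fun k _ ↦ ?_)
  rw [norm_smul]
  exact mul_le_mul (hp k) (hbasis k) (norm_nonneg _) ((norm_nonneg _).trans (hp k))

theorem norm_apply_le_matMaxNorm {n : ℕ} (M : Matrix (Fin n) (Fin n) ℂ) (i j : Fin n) :
    ‖M i j‖ ≤ matMaxNorm M :=
  (le_ciSup (Set.finite_range _).bddAbove j).trans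
    (le_ciSup (f := fun i ↦ ⨆ j, ‖M i j‖) (Set.finite_range _).bddAbove i)

theorem stmt_7_general (n : ℕ) (ε B : ℝ) (hε : 0 < ε)
    (M U : Matrix (Fin n) (Fin n) ℂ) (hU : IsUnit U)
    (lam : Fin n → ℂ)
    (hM : M = U * Matrix.diagonal lam * U⁻¹)
    (hsep : ∀ i j, i ≠ j → ε ≤ ‖lam i - lam j‖)
    (hlamB : ∀ i, ‖lam i‖ ≤ B)
    (E : ℕ) (δ : ℝ)
    (p : Polynomial ℂ)
    (hp : ∀ i, ‖p.eval (lam i) - lam i ^ E‖ ≤ δ) :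
    ∀ i j, ‖(Polynomial.aeval M p - M ^ E) i j‖ ≤
      δ * (n : ℝ) ^ 2 * (1 + B) ^ (n - 1) * (ε⁻¹) ^ (n - 1) *
        ((n : ℝ) * max 1 (matMaxNorm M)) ^ (n - 1) := by
  intro i j
  have : Nonempty (Fin n) := ⟨i⟩
  have hB : 0 ≤ B := (norm_nonneg _).trans (hlamB i)
  have hδ : 0 ≤ δ := (norm_nonneg _).trans (hp i)
  set m := max 1 (matMaxNorm M)
  have hnm : 1 ≤ (n : ℝ) * m :=
    one_le_mul_of_one_le_of_one_le (Nat.one_le_cast.2 (Fin.pos i)) (le_max_left _ _)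
  have hnormM : ‖M‖ ≤ n * m := by
    simpa using M.linfty_opNorm_le_card_mul (zero_le_one.trans (le_max_left _ _))
      fun k l ↦ (norm_apply_le_matMaxNorm M k l).trans (le_max_right _ _)
  have hfactor : ε⁻¹ * (‖M‖ + B) ≤ ε⁻¹ * ((1 + B) * (n * m)) :=
    mul_le_mul_of_nonneg_left (by nlinarith) (inv_nonneg.2 hε.le)
  have hn : (n : ℝ) ≤ n ^ 2 := by norm_cast; nlinarith
  rw [← aeval_X_pow (R := ℂ), ← map_sub]
  calc ‖aeval M (p - X ^ E) i j‖ ≤ ‖aeval M (p - X ^ E)‖ :=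
        (aeval M (p - X ^ E)).norm_apply_le_linfty_opNorm i j
    _ ≤ n * (δ * (ε⁻¹ * (‖M‖ + B)) ^ (n - 1)) := by
      have h := Matrix.norm_aeval_conj_diagonal_le hU hε hsep hlamB (p - X ^ E) fun k ↦ by
        simpa using hp k
      rwa [← hM, Fintype.card_fin] at h
    _ ≤ n * (δ * (ε⁻¹ * ((1 + B) * (n * m))) ^ (n - 1)) := by
      have := norm_nonneg M
      gcongr
    _ ≤ n ^ 2 * (δ * (ε⁻¹ * ((1 + B) * (n * m))) ^ (n - 1)) := by
      gcongr
    _ = _ := by rw [mul_pow, mul_pow]; ring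

/-- If `M = U * diag(λ) * U⁻¹` with pairwise `ε`-separated eigenvalues bounded by `B`,
and `p` is a polynomial with `|p(λ i) - λ i ^ E| ≤ δ` for all `i`, then every entry of
`p(M) - M^E` is bounded by `δ * n² * (1+B)^(n-1) * ε⁻¹^(n-1) * (n * max 1 ‖M‖)^(n-1)`. -/
theorem stmt_7 (n : ℕ) (hn : 1 ≤ n) (ε B : ℝ) (hε : 0 < ε)
    (M U : Matrix (Fin n) (Fin n) ℂ) (hU : IsUnit U)
    (lam : Fin n → ℂ)
    (hM : M = U * Matrix.diagonal lam * U⁻¹)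
    (hsep : ∀ i j, i ≠ j → ε ≤ ‖lam i - lam j‖)
    (hlamB : ∀ i, ‖lam i‖ ≤ B)
    (E : ℕ) (δ : ℝ) (hδ : 0 < δ)
    (p : Polynomial ℂ)
    (hp : ∀ i, ‖p.eval (lam i) - lam i ^ E‖ ≤ δ) :
    ∀ i j, ‖(Polynomial.aeval M p - M ^ E) i j‖ ≤
      δ * (n : ℝ) ^ 2 * (1 + B) ^ (n - 1) * (ε⁻¹) ^ (n - 1) *
        ((n : ℝ) * max 1 (matMaxNorm M)) ^ (n - 1) :=
  stmt_7_general n ε B hε M U hU lam hM hsep hlamB E δ p hp
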